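/- arXiv:1803.02151 — 2 statements merged into one kernel-verified Lean document; each statement's English description precedes it below -/
import Mathlib

section
/- Let (Ω₁×Ω₂, 𝒢, P₁⊗P₂) be a product probability space, Ω' a separable metric space with its Borel σ-algebra, Xⁿ : Ω₁×Ω₂ → Ω' and Yⁿ : Ω₂ → Ω' random variables. Suppose Yⁿ converges in distribution under P₂ to Y, and for every bounded continuous F : Ω' → ℝ, E₁[F(Xⁿ)] → E[F(X)] holds P₂-almost surely (where E₁ is expectation over Ω₁ only). Then the pair (Xⁿ, Yⁿ) converges in distribution under P₁⊗P₂ to (X, Y) with X and Y independent. -/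
/-!
By the Lipschitz form of the portmanteau theorem it suffices to treat a bounded `K`-Lipschitz `H`.
By Fubini, `E[H(Xⁿ, Yⁿ)] = E₂[Φₙ(·, Yⁿ)]` with `Φₙ(ω₂, y) = E₁[H(Xⁿ(·, ω₂), y)]`, and
`∫ H d(μX ⊗ μY) = ∫ g dμY` with `g(y) = ∫ H(x, y) dμX`. Since `g` is bounded and `K`-Lipschitz,
`E₂[g(Yⁿ)] → ∫ g dμY`, so it remains to show `E₂|Φₙ(·, Yⁿ) - g(Yⁿ)| → 0`. For fixed `y`,
`Φₙ(·, y) → g(y)` almost surely, hence in `L¹`. The maps `y ↦ Φₙ(ω₂, y) - g(y)` are uniformly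
Lipschitz, so it suffices to control them at finitely many points: weak convergence of the laws of
`Yⁿ` keeps `Yⁿ` within `ε` of a fixed finite set, except on an event of probability at most `ε`.
-/

open MeasureTheory Filter Topology BoundedContinuousFunction Metric Set
open scoped NNReal

theorem tendsto_map_iff_forall_integral_comp_tendsto {Ω E ι : Type*} [MeasurableSpace Ω]
    [TopologicalSpace E] [MeasurableSpace E] [OpensMeasurableSpace E] {l : Filter ι}
    (P : Measure Ω) [IsProbabilityMeasure P] {Y : ι → Ω → E} (hY : ∀ i, AEMeasurable (Y i) P)
    (μ : ProbabilityMeasure E) :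
    Tendsto (β := ProbabilityMeasure E)
      (fun i ↦ ⟨P.map (Y i), Measure.isProbabilityMeasure_map (hY i)⟩) l (𝓝 μ) ↔
      ∀ f : E →ᵇ ℝ, Tendsto (fun i ↦ ∫ ω, f (Y i ω) ∂P) l (𝓝 (∫ x, f x ∂μ)) := by
  refine ProbabilityMeasure.tendsto_iff_forall_integral_tendsto.trans (forall_congr' fun f ↦ ?_)
  simp only [ProbabilityMeasure.coe_mk, integral_map (hY _) f.continuous.aestronglyMeasurable]

theorem tendsto_integral_abs_sub_of_ae_tendsto {Ω ι : Type*} [MeasurableSpace Ω]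
    {P : Measure Ω} [IsFiniteMeasure P] {l : Filter ι} [l.IsCountablyGenerated]
    {f : ι → Ω → ℝ} {c C : ℝ} (hf_meas : ∀ i, AEStronglyMeasurable (f i) P)
    (hf_le : ∀ i ω, |f i ω| ≤ C) (hf : ∀ᵐ ω ∂P, Tendsto (fun i ↦ f i ω) l (𝓝 c)) :
    Tendsto (fun i ↦ ∫ ω, |f i ω - c| ∂P) l (𝓝 0) := by
  simpa using tendsto_integral_filter_of_dominated_convergence (F := fun i ω ↦ |f i ω - c|)
    (f := fun _ ↦ 0) (fun _ ↦ C + |c|)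
    (.of_forall fun i ↦ ((hf_meas i).sub aestronglyMeasurable_const).norm)
    (.of_forall fun i ↦ .of_forall fun ω ↦ by
      rw [Real.norm_eq_abs, abs_abs]
      exact (abs_sub _ _).trans (add_le_add_left (hf_le i ω) _))
    (integrable_const _) (hf.mono fun ω h ↦ by simpa using (h.sub_const c).abs)

theorem tendsto_integral_of_tendsto_integral_abs_sub {Ω ι : Type*} [MeasurableSpace Ω]
    {P : Measure Ω} {l : Filter ι} {f g : ι → Ω → ℝ} {L : ℝ} (hf : ∀ i, Integrable (f i) P)
    (hg : ∀ i, Integrable (g i) P) (hfg : Tendsto (fun i ↦ ∫ ω, |f i ω - g i ω| ∂P) l (𝓝 0))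
    (hgL : Tendsto (fun i ↦ ∫ ω, g i ω ∂P) l (𝓝 L)) :
    Tendsto (fun i ↦ ∫ ω, f i ω ∂P) l (𝓝 L) := by
  have hdiff : Tendsto (fun i ↦ ∫ ω, (f i ω - g i ω) ∂P) l (𝓝 0) :=
    squeeze_zero_norm (fun i ↦ by simpa only [Real.norm_eq_abs] using
      norm_integral_le_integral_norm fun ω ↦ f i ω - g i ω) hfg
  refine (tendsto_congr fun i ↦ ?_).2 (by simpa using hdiff.add hgL)
  rw [integral_sub (hf i) (hg i), sub_add_cancel]

theorem BoundedContinuousFunction.abs_integral_comp_le {α β : Type*} [MeasurableSpace α]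
    [TopologicalSpace β] {μ : Measure α} [IsProbabilityMeasure μ] (f : β →ᵇ ℝ) (Z : α → β) :
    |∫ a, f (Z a) ∂μ| ≤ ‖f‖ := by
  simpa using norm_integral_le_of_norm_le_const (μ := μ)
    (.of_forall fun a ↦ f.norm_coe_le_norm (Z a))

theorem LipschitzWith.integral {α E : Type*} [MeasurableSpace α] [PseudoMetricSpace E]
    {μ : Measure α} [IsProbabilityMeasure μ] {f : α → E → ℝ} {K : ℝ≥0}
    (hf : ∀ a, LipschitzWith K (f a)) (hint : ∀ y, Integrable (fun a ↦ f a y) μ) :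
    LipschitzWith K fun y ↦ ∫ a, f a y ∂μ := by
  refine LipschitzWith.of_dist_le_mul fun y y' ↦ ?_
  rw [dist_eq_norm, ← integral_sub (hint y) (hint y')]
  simpa using norm_integral_le_of_norm_le_const (μ := μ)
    (.of_forall fun a ↦ (dist_eq_norm (f a y) (f a y')).symm.trans_le ((hf a).dist_le_mul y y'))

theorem LipschitzWith.integral_apply_prodMk {α E : Type*} [MeasurableSpace α]
    [PseudoMetricSpace E] [MeasurableSpace E] [OpensMeasurableSpace E] {μ : Measure α}
    [IsProbabilityMeasure μ] {H : (E × E) →ᵇ ℝ} {K : ℝ≥0} (hH : LipschitzWith K H)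
    {Z : α → E} (hZ : AEMeasurable Z μ) :
    LipschitzWith K fun y ↦ ∫ a, H (Z a, y) ∂μ := by
  refine .integral (fun a ↦ (hH.comp (.prodMk_left (Z a))).weaken (mul_one K).le) fun y ↦ ?_
  exact (BoundedContinuousFunction.integrable _ (H.compContinuous
    ⟨fun x ↦ (x, y), continuous_id.prodMk continuous_const⟩)).comp_aemeasurable hZ

theorem exists_finset_eventually_measureReal_compl_thickening_le {E ι : Type*}
    [PseudoMetricSpace E] [TopologicalSpace.SeparableSpace E] [MeasurableSpace E]
    [OpensMeasurableSpace E] {l : Filter ι} {μs : ι → ProbabilityMeasure E}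
    {μ : ProbabilityMeasure E} (h : Tendsto μs l (𝓝 μ)) {ε : ℝ} (hε : 0 < ε) :
    ∃ S : Finset E, ∀ᶠ i in l, (μs i : Measure E).real (thickening ε (S : Set E))ᶜ ≤ ε := by
  classical
  have := nonempty_of_isProbabilityMeasure (μ : Measure E)
  obtain ⟨x, hx⟩ := TopologicalSpace.exists_dense_seq E
  set F : ℕ → Set E := fun N ↦ (thickening ε ((Finset.range N).image x : Set E))ᶜ
  have hF_anti : Antitone F := fun M N hMN ↦ compl_subset_compl.2 <|
    thickening_subset_of_subset ε
      (Finset.coe_subset.2 (Finset.image_subset_image (Finset.range_mono hMN)))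
  have hF_empty : ⋂ N, F N = ∅ := by
    refine iInter_eq_empty_iff.2 fun y ↦ ?_
    obtain ⟨i, hi⟩ := hx.exists_dist_lt y hε
    exact ⟨i + 1, not_not.2 (mem_thickening_iff.2 ⟨x i, by simpa using ⟨i, le_rfl, rfl⟩, hi⟩)⟩
  have hF_lim : Tendsto (fun N ↦ (μ : Measure E) (F N)) atTop (𝓝 0) := by
    have := tendsto_measure_iInter_atTop (μ := μ) (s := F)
      (fun N ↦ isOpen_thickening.isClosed_compl.measurableSet.nullMeasurableSet) hF_anti
      ⟨0, measure_ne_top _ _⟩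
    rwa [hF_empty, measure_empty] at this
  obtain ⟨N, hN⟩ := (hF_lim.eventually (gt_mem_nhds (ENNReal.ofReal_pos.2 hε))).exists
  refine ⟨(Finset.range N).image x, ?_⟩
  have hlimsup := (ProbabilityMeasure.limsup_measure_closed_le_of_tendsto h
    isOpen_thickening.isClosed_compl).trans_lt hN
  filter_upwards [eventually_lt_of_limsup_lt hlimsup] with i hi
  exact ENNReal.toReal_le_of_le_ofReal hε.le hi.le

theorem LipschitzWith.abs_le_sum_add_indicator_compl_thickening {E : Type*}
    [PseudoMetricSpace E] {f : E → ℝ} {K : ℝ≥0} {C ε : ℝ} (hf : LipschitzWith K f)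
    (hfC : ∀ y, |f y| ≤ C) (hε : 0 ≤ ε) (S : Finset E) (y : E) :
    |f y| ≤ ∑ s ∈ S, |f s| + K * ε + (thickening ε (S : Set E))ᶜ.indicator (fun _ ↦ C) y := by
  have hsum_nonneg : 0 ≤ ∑ s ∈ S, |f s| := Finset.sum_nonneg fun s _ ↦ abs_nonneg _
  have hKε : 0 ≤ K * ε := mul_nonneg K.coe_nonneg hε
  by_cases hy : y ∈ thickening ε (S : Set E)
  · obtain ⟨s, hs, hys⟩ := mem_thickening_iff.1 hy
    have hlip : |f y| ≤ |f s| + K * ε := by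
      have hdist : |f y - f s| ≤ K * ε := by
        rw [← Real.dist_eq]
        exact (hf.dist_le_mul y s).trans (by gcongr)
      linarith [abs_sub_abs_le_abs_sub (f y) (f s)]
    have hs_le : |f s| ≤ ∑ s ∈ S, |f s| :=
      Finset.single_le_sum (f := fun s ↦ |f s|) (fun _ _ ↦ abs_nonneg _) hs
    rw [indicator_of_notMem (not_not.2 hy)]
    linarith
  · rw [indicator_of_mem hy]
    linarith [hfC y]

theorem integral_abs_comp_le_sum_add_measureReal_compl_thickening {Ω E : Type*}
    [MeasurableSpace Ω] [PseudoMetricSpace E] [MeasurableSpace E] [OpensMeasurableSpace E]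
    {P : Measure Ω} [IsProbabilityMeasure P] {ψ : Ω → E → ℝ} {Y : Ω → E} {K : ℝ≥0} {C ε : ℝ}
    (hψ_lip : ∀ ω, LipschitzWith K (ψ ω)) (hψ_le : ∀ ω y, |ψ ω y| ≤ C)
    (hψ_meas : ∀ y, AEStronglyMeasurable (fun ω ↦ ψ ω y) P)
    (hψY_meas : AEStronglyMeasurable (fun ω ↦ ψ ω (Y ω)) P) (hY : AEMeasurable Y P)
    (hε : 0 ≤ ε) (S : Finset E) :
    ∫ ω, |ψ ω (Y ω)| ∂P ≤
      ∑ s ∈ S, ∫ ω, |ψ ω s| ∂P + K * ε + (P.map Y).real (thickening ε (S : Set E))ᶜ * C := by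
  have hU : MeasurableSet (thickening ε (S : Set E))ᶜ :=
    isOpen_thickening.isClosed_compl.measurableSet
  have hint : ∀ y, Integrable (fun ω ↦ |ψ ω y|) P := fun y ↦
    .of_bound (hψ_meas y).norm C (.of_forall fun ω ↦ by simpa using hψ_le ω y)
  have hsum_int : Integrable (fun ω ↦ ∑ s ∈ S, |ψ ω s|) P :=
    integrable_finsetSum S fun s _ ↦ hint s
  have hsum_add_int : Integrable (fun ω ↦ ∑ s ∈ S, |ψ ω s| + K * ε) P :=
    hsum_int.add (integrable_const _)
  have hind : Integrable (fun ω ↦ (thickening ε (S : Set E))ᶜ.indicator (fun _ ↦ C) (Y ω)) P :=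
    ((integrable_const C).indicator hU).comp_aemeasurable hY
  calc ∫ ω, |ψ ω (Y ω)| ∂P
      ≤ ∫ ω, (∑ s ∈ S, |ψ ω s| + K * ε +
          (thickening ε (S : Set E))ᶜ.indicator (fun _ ↦ C) (Y ω)) ∂P :=
        integral_mono (.of_bound hψY_meas.norm C (.of_forall fun ω ↦ by simpa using hψ_le ω _))
          (hsum_add_int.add hind)
          fun ω ↦ (hψ_lip ω).abs_le_sum_add_indicator_compl_thickening (hψ_le ω) hε S _
    _ = ∑ s ∈ S, ∫ ω, |ψ ω s| ∂P + K * ε + (P.map Y).real (thickening ε (S : Set E))ᶜ * C := by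
        rw [integral_add hsum_add_int hind, integral_add hsum_int (integrable_const _),
          integral_finsetSum S fun s _ ↦ hint s, integral_const, probReal_univ, one_smul,
          ← integral_map hY (stronglyMeasurable_const.indicator hU).aestronglyMeasurable,
          integral_indicator_const C hU, smul_eq_mul]

theorem tendsto_integral_abs_comp_of_lipschitzWith {Ω E ι : Type*} [MeasurableSpace Ω]
    [PseudoMetricSpace E] [MeasurableSpace E] [OpensMeasurableSpace E] {l : Filter ι}
    {P : Measure Ω} [IsProbabilityMeasure P] {ψ : ι → Ω → E → ℝ} {Y : ι → Ω → E}
    {K C : ℝ≥0} (hψ_lip : ∀ i ω, LipschitzWith K (ψ i ω)) (hψ_le : ∀ i ω y, |ψ i ω y| ≤ C)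
    (hψ_meas : ∀ i y, AEStronglyMeasurable (fun ω ↦ ψ i ω y) P)
    (hψY_meas : ∀ i, AEStronglyMeasurable (fun ω ↦ ψ i ω (Y i ω)) P)
    (hY : ∀ i, AEMeasurable (Y i) P)
    (hψ : ∀ y, Tendsto (fun i ↦ ∫ ω, |ψ i ω y| ∂P) l (𝓝 0))
    (hY_tight : ∀ ε > 0, ∃ S : Finset E,
      ∀ᶠ i in l, (P.map (Y i)).real (thickening ε (S : Set E))ᶜ ≤ ε) :
    Tendsto (fun i ↦ ∫ ω, |ψ i ω (Y i ω)| ∂P) l (𝓝 0) := by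
  have key : ∀ ε > 0, ∀ᶠ i in l, ∫ ω, |ψ i ω (Y i ω)| ∂P < (K + C + 1) * ε := by
    intro ε hε
    obtain ⟨S, hS⟩ := hY_tight ε hε
    have hsum : Tendsto (fun i ↦ ∑ s ∈ S, ∫ ω, |ψ i ω s| ∂P) l (𝓝 0) := by
      simpa using tendsto_finsetSum S fun s _ ↦ hψ s
    filter_upwards [hS, hsum.eventually (gt_mem_nhds hε)] with i hS_i hsum_i
    calc ∫ ω, |ψ i ω (Y i ω)| ∂P
        ≤ ∑ s ∈ S, ∫ ω, |ψ i ω s| ∂P + K * ε +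
            (P.map (Y i)).real (thickening ε (S : Set E))ᶜ * C :=
          integral_abs_comp_le_sum_add_measureReal_compl_thickening (hψ_lip i) (hψ_le i)
            (hψ_meas i) (hψY_meas i) (hY i) hε.le S
      _ < ε + K * ε + ε * C := by
          have := mul_le_mul_of_nonneg_right hS_i C.coe_nonneg
          linarith
      _ = (K + C + 1) * ε := by ring
  refine tendsto_order.2 ⟨fun a ha ↦ .of_forall fun i ↦
    ha.trans_le (integral_nonneg fun ω ↦ abs_nonneg _), fun a ha ↦ ?_⟩
  have hKC : (0 : ℝ) < K + C + 1 := by positivity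
  filter_upwards [key (a / (K + C + 1)) (div_pos ha hKC)] with i hi
  rwa [mul_div_cancel₀ _ hKC.ne'] at hi

theorem tendsto_integral_prodMk_of_lipschitzWith {Ω₁ Ω₂ Ω' : Type*} [MeasurableSpace Ω₁]
    [MeasurableSpace Ω₂] {P₁ : Measure Ω₁} {P₂ : Measure Ω₂} [IsProbabilityMeasure P₁]
    [IsProbabilityMeasure P₂] [PseudoMetricSpace Ω'] [TopologicalSpace.SeparableSpace Ω']
    [MeasurableSpace Ω'] [OpensMeasurableSpace Ω'] {X : ℕ → Ω₁ × Ω₂ → Ω'} {Y : ℕ → Ω₂ → Ω'}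
    (hX : ∀ n, Measurable (X n)) (hY : ∀ n, Measurable (Y n)) {μX μY : Measure Ω'}
    [IsProbabilityMeasure μX] [IsProbabilityMeasure μY]
    (hYconv : ∀ G : Ω' →ᵇ ℝ,
      Tendsto (fun n ↦ ∫ ω₂, G (Y n ω₂) ∂P₂) atTop (𝓝 (∫ y, G y ∂μY)))
    (hXconv : ∀ F : Ω' →ᵇ ℝ, ∀ᵐ ω₂ ∂P₂,
      Tendsto (fun n ↦ ∫ ω₁, F (X n (ω₁, ω₂)) ∂P₁) atTop (𝓝 (∫ x, F x ∂μX)))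
    (H : (Ω' × Ω') →ᵇ ℝ) {K : ℝ≥0} (hH : LipschitzWith K H) :
    Tendsto (fun n ↦ ∫ ω, H (X n ω, Y n ω.2) ∂(P₁.prod P₂)) atTop
      (𝓝 (∫ p, H p ∂(μX.prod μY))) := by
  set Φ : ℕ → Ω₂ → Ω' → ℝ := fun n ω₂ y ↦ ∫ ω₁, H (X n (ω₁, ω₂), y) ∂P₁
  set g : Ω' → ℝ := fun y ↦ ∫ x, H (x, y) ∂μX
  have hΦ_lip : ∀ n ω₂, LipschitzWith K (Φ n ω₂) := fun n ω₂ ↦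
    hH.integral_apply_prodMk ((hX n).comp measurable_prodMk_right).aemeasurable
  have hg_lip : LipschitzWith K g := hH.integral_apply_prodMk aemeasurable_id
  have hΦ_le : ∀ n ω₂ y, |Φ n ω₂ y| ≤ ‖H‖ := fun _ _ _ ↦ H.abs_integral_comp_le _
  have hg_le : ∀ y, |g y| ≤ ‖H‖ := fun _ ↦ H.abs_integral_comp_le _
  have hpair : ∀ n, Measurable fun ω : Ω₁ × Ω₂ ↦ (X n ω, Y n ω.2) := fun n ↦
    (hX n).prodMk ((hY n).comp measurable_snd)
  have hΦ_meas : ∀ n y, StronglyMeasurable fun ω₂ ↦ Φ n ω₂ y := fun n y ↦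
    ((H.continuous.comp (continuous_id.prodMk continuous_const)).measurable.comp
      (hX n)).stronglyMeasurable.integral_prod_left'
  have hΦY_meas : ∀ n, StronglyMeasurable fun ω₂ ↦ Φ n ω₂ (Y n ω₂) := fun n ↦
    (H.continuous.measurable.comp (hpair n)).stronglyMeasurable.integral_prod_left'
  have hgY_meas : ∀ n, StronglyMeasurable fun ω₂ ↦ g (Y n ω₂) := fun n ↦
    (hg_lip.continuous.measurable.comp (hY n)).stronglyMeasurable
  have hY_law := (tendsto_map_iff_forall_integral_comp_tendsto P₂ (fun n ↦ (hY n).aemeasurable)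
    ⟨μY, inferInstance⟩).2 hYconv
  have hL1 : Tendsto (fun n ↦ ∫ ω₂, |Φ n ω₂ (Y n ω₂) - g (Y n ω₂)| ∂P₂) atTop (𝓝 0) :=
    tendsto_integral_abs_comp_of_lipschitzWith (ψ := fun n ω₂ y ↦ Φ n ω₂ y - g y)
      (C := ‖H‖₊ + ‖H‖₊) (fun n ω₂ ↦ (hΦ_lip n ω₂).sub hg_lip)
      (fun n ω₂ y ↦ by
        push_cast
        exact (abs_sub _ _).trans (add_le_add (hΦ_le n ω₂ y) (hg_le y)))
      (fun n y ↦ ((hΦ_meas n y).sub stronglyMeasurable_const).aestronglyMeasurable)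
      (fun n ↦ ((hΦY_meas n).sub (hgY_meas n)).aestronglyMeasurable)
      (fun n ↦ (hY n).aemeasurable)
      (fun y ↦ tendsto_integral_abs_sub_of_ae_tendsto (fun n ↦ (hΦ_meas n y).aestronglyMeasurable)
        (fun n ω₂ ↦ hΦ_le n ω₂ y)
        (hXconv (H.compContinuous ⟨fun x ↦ (x, y), continuous_id.prodMk continuous_const⟩)))
      fun ε hε ↦ exists_finset_eventually_measureReal_compl_thickening_le hY_law hε
  have hfubini : ∀ n, ∫ ω, H (X n ω, Y n ω.2) ∂(P₁.prod P₂) = ∫ ω₂, Φ n ω₂ (Y n ω₂) ∂P₂ :=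
    fun n ↦ integral_prod_symm _ ((H.integrable _).comp_aemeasurable (hpair n).aemeasurable)
  rw [integral_prod_symm _ (H.integrable _), tendsto_congr hfubini]
  exact tendsto_integral_of_tendsto_integral_abs_sub
    (fun n ↦ .of_bound (hΦY_meas n).aestronglyMeasurable ‖H‖ (.of_forall fun _ ↦ hΦ_le _ _ _))
    (fun n ↦ .of_bound (hgY_meas n).aestronglyMeasurable ‖H‖ (.of_forall fun _ ↦ hg_le _)) hL1
    (hYconv (.ofNormedAddCommGroup g hg_lip.continuous ‖H‖ hg_le))

/-- Composite convergence lemma: if `Yⁿ : Ω₂ → Ω'` converges in distribution under `P₂`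
to (the law of) `Y`, and for every bounded continuous `F`, the partial expectation
`E₁[F(Xⁿ)]` converges `P₂`-a.s. to `E[F(X)]`, then `(Xⁿ, Yⁿ)` converges in distribution
under `P₁ ⊗ P₂` to `(X, Y)` with `X` and `Y` independent (i.e. to the product law). -/
theorem composite_convergence {Ω₁ Ω₂ : Type*} [MeasurableSpace Ω₁] [MeasurableSpace Ω₂]
    (P₁ : Measure Ω₁) (P₂ : Measure Ω₂) [IsProbabilityMeasure P₁] [IsProbabilityMeasure P₂]
    {Ω' : Type*} [MetricSpace Ω'] [TopologicalSpace.SeparableSpace Ω']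
    [MeasurableSpace Ω'] [BorelSpace Ω']
    (X : ℕ → Ω₁ × Ω₂ → Ω') (Y : ℕ → Ω₂ → Ω')
    (hX : ∀ n, Measurable (X n)) (hY : ∀ n, Measurable (Y n))
    (μX μY : Measure Ω') [IsProbabilityMeasure μX] [IsProbabilityMeasure μY]
    (hYconv : ∀ G : Ω' →ᵇ ℝ,
      Tendsto (fun n => ∫ ω₂, G (Y n ω₂) ∂P₂) atTop (𝓝 (∫ y, G y ∂μY)))
    (hXconv : ∀ F : Ω' →ᵇ ℝ, ∀ᵐ ω₂ ∂P₂,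
      Tendsto (fun n => ∫ ω₁, F (X n (ω₁, ω₂)) ∂P₁) atTop (𝓝 (∫ x, F x ∂μX))) :
    ∀ H : (Ω' × Ω') →ᵇ ℝ,
      Tendsto (fun n => ∫ ω, H (X n ω, Y n ω.2) ∂(P₁.prod P₂)) atTop
        (𝓝 (∫ p, H p ∂(μX.prod μY))) := by
  have hpair : ∀ n, Measurable fun ω : Ω₁ × Ω₂ ↦ (X n ω, Y n ω.2) := fun n ↦
    (hX n).prodMk ((hY n).comp measurable_snd)
  refine (tendsto_map_iff_forall_integral_comp_tendsto (P₁.prod P₂)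
    (fun n ↦ (hpair n).aemeasurable) ⟨μX.prod μY, inferInstance⟩).1 ?_
  refine tendsto_iff_forall_lipschitz_integral_tendsto.2 fun f ⟨C, hC⟩ ⟨K, hK⟩ ↦ ?_
  simp only [ProbabilityMeasure.coe_mk,
    integral_map (hpair _).aemeasurable hK.continuous.aestronglyMeasurable]
  exact tendsto_integral_prodMk_of_lipschitzWith hX hY hYconv hXconv ⟨⟨f, hK.continuous⟩, C, hC⟩ hK
end

section
/- In the setting of Lemma on composite convergence: if Xⁿ and Yⁿ are real-valued, Yⁿ → Y in distribution under P₂, and E₁[F(Xⁿ)] → E[F(X)] P₂-a.s. for all bounded continuous F, then Xⁿ + Yⁿ converges in distribution under P₁⊗P₂ to X + Y where X and Y are independent. -/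
/-!
By Lévy's continuity theorem it suffices to show that the characteristic function of
`Xⁿ + Yⁿ` converges to `φ_X φ_Y`, the characteristic function of `μX ∗ μY`. Fubini writes it
as `E₂[φₙ(ω₂) e^{i t Yⁿ}]`, where `φₙ(ω₂) = E₁[e^{i t Xⁿ}]`. The hypothesis on `Xⁿ`, applied to
`cos (t ·)` and `sin (t ·)`, gives `φₙ → φ_X(t)` `P₂`-a.s., so by dominated convergence `φₙ` may be
replaced by the constant `φ_X(t)`; what is left, `φ_X(t) E₂[e^{i t Yⁿ}]`, tends to `φ_X(t) φ_Y(t)`.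
-/

open MeasureTheory ProbabilityTheory Filter Topology BoundedContinuousFunction
open scoped RealInnerProductSpace

open Complex in
lemma tendsto_integral_comp_of_tendsto_re_im {ι α E : Type*} {l : Filter ι} [MeasurableSpace α]
    [TopologicalSpace E] [MeasurableSpace E] [OpensMeasurableSpace E]
    {ρ : Measure α} [IsFiniteMeasure ρ] {μ : Measure E} [IsFiniteMeasure μ]
    {Z : ι → α → E} (hZ : ∀ i, Measurable (Z i)) (g : E →ᵇ ℂ)
    (hre : Tendsto (fun i ↦ ∫ a, (g (Z i a)).re ∂ρ) l (𝓝 (∫ x, (g x).re ∂μ)))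
    (him : Tendsto (fun i ↦ ∫ a, (g (Z i a)).im ∂ρ) l (𝓝 (∫ x, (g x).im ∂μ))) :
    Tendsto (fun i ↦ ∫ a, g (Z i a) ∂ρ) l (𝓝 (∫ x, g x ∂μ)) := by
  have hg (i : ι) : Integrable (fun a ↦ g (Z i a)) ρ :=
    (g.integrable (ρ.map (Z i))).comp_measurable (hZ i)
  rw [← integral_re_add_im (g.integrable μ)]
  simp_rw [← integral_re_add_im (hg _)]
  exact ((continuous_ofReal.tendsto _).comp hre).add
    (((continuous_ofReal.tendsto _).comp him).mul_const _)

lemma tendsto_integral_mul_of_ae_tendsto {ι Ω : Type*} {l : Filter ι} [l.IsCountablyGenerated]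
    [MeasurableSpace Ω] {P : Measure Ω} [IsFiniteMeasure P] {φ ψ : ι → Ω → ℂ} {c d : ℂ}
    {C D : ℝ} (hφm : ∀ i, AEStronglyMeasurable (φ i) P) (hψm : ∀ i, AEStronglyMeasurable (ψ i) P)
    (hφC : ∀ i ω, ‖φ i ω‖ ≤ C) (hψD : ∀ i ω, ‖ψ i ω‖ ≤ D)
    (hφ : ∀ᵐ ω ∂P, Tendsto (φ · ω) l (𝓝 c)) (hψ : Tendsto (fun i ↦ ∫ ω, ψ i ω ∂P) l (𝓝 d)) :
    Tendsto (fun i ↦ ∫ ω, φ i ω * ψ i ω ∂P) l (𝓝 (c * d)) := by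
  have hbound (i : ι) (ω : Ω) : ‖(φ i ω - c) * ψ i ω‖ ≤ (C + ‖c‖) * D := by
    rw [norm_mul]
    exact mul_le_mul ((norm_sub_le _ _).trans (by linarith [hφC i ω])) (hψD i ω) (norm_nonneg _)
      (by linarith [norm_nonneg (φ i ω), hφC i ω, norm_nonneg c])
  have hmeas (i : ι) : AEStronglyMeasurable (fun ω ↦ (φ i ω - c) * ψ i ω) P :=
    ((hφm i).sub aestronglyMeasurable_const).mul (hψm i)
  have herror : Tendsto (fun i ↦ ∫ ω, (φ i ω - c) * ψ i ω ∂P) l (𝓝 0) := by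
    have hlim : ∀ᵐ ω ∂P, Tendsto (fun i ↦ (φ i ω - c) * ψ i ω) l (𝓝 0) := by
      filter_upwards [hφ] with ω hω
      refine Tendsto.zero_mul_isBoundedUnder_le ?_ (isBoundedUnder_of ⟨D, fun i ↦ hψD i ω⟩)
      simpa using hω.sub_const c
    simpa using tendsto_integral_filter_of_dominated_convergence _
      (Eventually.of_forall hmeas) (Eventually.of_forall fun i ↦ ae_of_all _ (hbound i))
      (integrable_const _) hlim
  have hsplit (i : ι) :
      ∫ ω, φ i ω * ψ i ω ∂P = ∫ ω, (φ i ω - c) * ψ i ω ∂P + c * ∫ ω, ψ i ω ∂P := by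
    rw [← integral_const_mul, ← integral_add (.of_bound (hmeas i) _ (ae_of_all _ (hbound i)))
      ((Integrable.of_bound (hψm i) D (ae_of_all _ (hψD i))).const_mul c)]
    simp_rw [sub_mul, sub_add_cancel]
  simp_rw [hsplit]
  simpa using herror.add (hψ.const_mul c)

section ProductSpace

open Complex

variable {Ω₁ Ω₂ E : Type*} [MeasurableSpace Ω₁] [MeasurableSpace Ω₂]
  [NormedAddCommGroup E] [InnerProductSpace ℝ E] [MeasurableSpace E] [BorelSpace E]
  [SecondCountableTopology E] {P₁ : Measure Ω₁} {P₂ : Measure Ω₂}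
  [IsFiniteMeasure P₁] [IsFiniteMeasure P₂]

lemma charFun_map_prod_add_comp_snd {X : Ω₁ × Ω₂ → E} {Y : Ω₂ → E} (hX : Measurable X)
    (hY : Measurable Y) (t : E) :
    charFun ((P₁.prod P₂).map fun ω ↦ X ω + Y ω.2) t
      = ∫ ω₂, (∫ ω₁, exp (⟪X (ω₁, ω₂), t⟫ * I) ∂P₁) * exp (⟪Y ω₂, t⟫ * I) ∂P₂ := by
  rw [charFun_apply, integral_map (by fun_prop) (by fun_prop), integral_prod_symm]
  · simp [inner_add_left, add_mul, exp_add, integral_mul_const]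
  · exact (integrable_const (1 : ℝ)).mono (by fun_prop) (by simp)

lemma tendsto_charFun_map_prod_add_comp_snd [IsProbabilityMeasure P₁] {ι : Type*}
    {l : Filter ι} [l.IsCountablyGenerated] {X : ι → Ω₁ × Ω₂ → E} {Y : ι → Ω₂ → E}
    (hX : ∀ i, Measurable (X i)) (hY : ∀ i, Measurable (Y i)) {μX μY : Measure E}
    [IsFiniteMeasure μX] [IsFiniteMeasure μY] {t : E}
    (hXchar : ∀ᵐ ω₂ ∂P₂,
      Tendsto (fun i ↦ ∫ ω₁, exp (⟪X i (ω₁, ω₂), t⟫ * I) ∂P₁) l (𝓝 (charFun μX t)))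
    (hYchar : Tendsto (fun i ↦ ∫ ω₂, exp (⟪Y i ω₂, t⟫ * I) ∂P₂) l (𝓝 (charFun μY t))) :
    Tendsto (fun i ↦ charFun ((P₁.prod P₂).map fun ω ↦ X i ω + Y i ω.2) t) l
      (𝓝 (charFun (μX ∗ μY) t)) := by
  simp only [charFun_conv, charFun_map_prod_add_comp_snd (hX _) (hY _)]
  refine tendsto_integral_mul_of_ae_tendsto (C := 1) (D := 1) (fun i ↦ ?_) (fun i ↦ ?_)
    (fun i ω₂ ↦ ?_) (fun i ω₂ ↦ (norm_exp_ofReal_mul_I _).le) hXchar hYchar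
  · exact (StronglyMeasurable.integral_prod_left' (f := fun ω ↦ innerProbChar t (X i ω))
      ((innerProbChar t).continuous.comp_stronglyMeasurable
        (hX i).stronglyMeasurable)).aestronglyMeasurable
  · exact ((innerProbChar t).continuous.measurable.comp (hY i)).aestronglyMeasurable
  · refine (norm_integral_le_of_norm_le_const (C := 1) (ae_of_all _ fun ω₁ ↦ ?_)).trans (by simp)
    exact (norm_exp_ofReal_mul_I _).le

end ProductSpace

/-- Composite convergence, real-valued version: if `Yⁿ → Y` in distribution under `P₂`
and `E₁[F(Xⁿ)] → E[F(X)]` `P₂`-a.s. for every bounded continuous `F`, then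
`Xⁿ + Yⁿ` converges in distribution under `P₁ ⊗ P₂` to `X + Y` with `X, Y` independent. -/
theorem composite_convergence_sum {Ω₁ Ω₂ : Type*} [MeasurableSpace Ω₁] [MeasurableSpace Ω₂]
    (P₁ : Measure Ω₁) (P₂ : Measure Ω₂) [IsProbabilityMeasure P₁] [IsProbabilityMeasure P₂]
    (X : ℕ → Ω₁ × Ω₂ → ℝ) (Y : ℕ → Ω₂ → ℝ)
    (hX : ∀ n, Measurable (X n)) (hY : ∀ n, Measurable (Y n))
    (μX μY : Measure ℝ) [IsProbabilityMeasure μX] [IsProbabilityMeasure μY]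
    (hYconv : ∀ G : ℝ →ᵇ ℝ,
      Tendsto (fun n => ∫ ω₂, G (Y n ω₂) ∂P₂) atTop (𝓝 (∫ y, G y ∂μY)))
    (hXconv : ∀ F : ℝ →ᵇ ℝ, ∀ᵐ ω₂ ∂P₂,
      Tendsto (fun n => ∫ ω₁, F (X n (ω₁, ω₂)) ∂P₁) atTop (𝓝 (∫ x, F x ∂μX))) :
    ∀ F : ℝ →ᵇ ℝ,
      Tendsto (fun n => ∫ ω, F (X n ω + Y n ω.2) ∂(P₁.prod P₂)) atTop
        (𝓝 (∫ p, F (p.1 + p.2) ∂(μX.prod μY))) := by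
  intro F
  have hXchar (t : ℝ) : ∀ᵐ ω₂ ∂P₂,
      Tendsto (fun n ↦ ∫ ω₁, innerProbChar t (X n (ω₁, ω₂)) ∂P₁) atTop (𝓝 (charFun μX t)) := by
    filter_upwards [hXconv ((innerProbChar t).comp _ RCLike.lipschitzWith_re),
      hXconv ((innerProbChar t).comp _ RCLike.lipschitzWith_im)] with ω₂ hre him
    rw [charFun_eq_integral_innerProbChar]
    exact tendsto_integral_comp_of_tendsto_re_im (fun n ↦ (hX n).comp measurable_prodMk_right)
      _ hre him
  have hYchar (t : ℝ) :
      Tendsto (fun n ↦ ∫ ω₂, innerProbChar t (Y n ω₂) ∂P₂) atTop (𝓝 (charFun μY t)) := by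
    rw [charFun_eq_integral_innerProbChar]
    exact tendsto_integral_comp_of_tendsto_re_im hY _
      (hYconv ((innerProbChar t).comp _ RCLike.lipschitzWith_re))
      (hYconv ((innerProbChar t).comp _ RCLike.lipschitzWith_im))
  let law (n : ℕ) : ProbabilityMeasure ℝ :=
    ⟨(P₁.prod P₂).map fun ω ↦ X n ω + Y n ω.2, Measure.isProbabilityMeasure_map (by fun_prop)⟩
  have hlaw : Tendsto law atTop (𝓝 ⟨μX ∗ μY, inferInstance⟩) :=
    ProbabilityMeasure.tendsto_of_tendsto_charFun fun t ↦
      tendsto_charFun_map_prod_add_comp_snd hX hY (hXchar t) (hYchar t)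
  have hF := ProbabilityMeasure.tendsto_iff_forall_integral_tendsto.1 hlaw F
  simp only [law, ProbabilityMeasure.coe_mk, Measure.conv] at hF
  rw [integral_map (by fun_prop) (by fun_prop)] at hF
  exact hF.congr fun n ↦ integral_map (by fun_prop) (by fun_prop)
end
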